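/- For i ≥ 0 and j ≥ 1 with i < j, in the rewrite system on {a,b,ā,b̄}: (ba)^i (bā)^j →* b^{2i} (bā)^{j-i}, and the word (āb)^{j-i} b^{2i} is the reversal of b^{2i}(bā)^{j-i}. -/

import Mathlib

/-- The four-letter alphabet `{a, b, ā, b̄}`; `A` stands for `ā` and `B` for `b̄`. -/
inductive L : Type
  | a | b | A | B
deriving DecidableEq

/-- The antiparallel letter: `a ↔ ā`, `b ↔ b̄`. -/
def bar : L → L
  | .a => .A
  | .A => .a
  | .b => .B
  | .B => .b

/-- Letterwise application of the involution `a ↔ ā`, `b ↔ b̄` to a word. -/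
def barw (w : List L) : List L := w.map bar

/-- The eight rewrite rules of the Sub Rosa system:
`ab→ba`, `bā→āb`, `āb̄→b̄ā`, `b̄a→ab̄`, `aā→ε`, `āa→ε`, `bb̄→ε`, `b̄b→ε`. -/
def Rule : List L → List L → Prop := fun x y =>
  (x = [.a, .b] ∧ y = [.b, .a]) ∨ (x = [.b, .A] ∧ y = [.A, .b]) ∨
  (x = [.A, .B] ∧ y = [.B, .A]) ∨ (x = [.B, .a] ∧ y = [.a, .B]) ∨
  (x = [.a, .A] ∧ y = []) ∨ (x = [.A, .a] ∧ y = []) ∨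
  (x = [.b, .B] ∧ y = []) ∨ (x = [.B, .b] ∧ y = [])

/-- One rewrite step: replace a factor matching the left side of a rule by its right side. -/
def Step (u v : List L) : Prop :=
  ∃ p s x y, Rule x y ∧ u = p ++ x ++ s ∧ v = p ++ y ++ s

/-- `u →* v`: the reflexive transitive closure of the rewrite step. -/
def Steps : List L → List L → Prop := Relation.ReflTransGen Step

/-- `rep w n` is the `n`-fold concatenation `w^n`. -/
def rep (w : List L) (n : ℕ) : List L := (List.replicate n w).flatten

/-- A matching on a word pairs each occurrence of a letter with an occurrence of its
antiparallel letter, bijectively (an involution without fixed points). -/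
structure Matching (w : List L) where
  m : Fin w.length → Fin w.length
  invol : ∀ i, m (m i) = i
  nofix : ∀ i, m i ≠ i
  compat : ∀ i, w.get (m i) = bar (w.get i)

/-- The 4-tuples of letters that are cyclic rotations of `(a, b, ā, b̄)`. -/
def Rot4 : L → L → L → L → Prop := fun x y z t =>
  (x = .a ∧ y = .b ∧ z = .A ∧ t = .B) ∨ (x = .b ∧ y = .A ∧ z = .B ∧ t = .a) ∨
  (x = .A ∧ y = .B ∧ z = .a ∧ t = .b) ∨ (x = .B ∧ y = .a ∧ z = .b ∧ t = .A)

/-- The crossing condition: whenever two matched pairs interleave (cross) in the cyclic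
word, the four letters read in positional order form a cyclic rotation of `a, b, ā, b̄`. -/
def CrossOK {w : List L} (M : Matching w) : Prop :=
  ∀ i j i' j' : Fin w.length, i < j → j < i' → i' < j' →
    M.m i = i' → M.m j = j' →
    Rot4 (w.get i) (w.get j) (w.get i') (w.get j')

/-- A word admits a matching satisfying the crossing condition. -/
def GoodWord (w : List L) : Prop := ∃ M : Matching w, CrossOK M

lemma rep_succ (w : List L) (n : ℕ) : rep w (n+1) = w ++ rep w n := by
  simp [rep, List.replicate_succ]

lemma rep_succ' (w : List L) (n : ℕ) : rep w (n+1) = rep w n ++ w := by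
  simp [rep, List.replicate_succ']

lemma rep_reverse (w : List L) (n : ℕ) : (rep w n).reverse = rep w.reverse n := by
  induction n with
  | zero => simp [rep]
  | succ n ih => rw [rep_succ, rep_succ']; simp [ih]

lemma step_append (p s u v : List L) (h : Step u v) :
    Step (p ++ u ++ s) (p ++ v ++ s) := by
  obtain ⟨p', s', x, y, hr, hu, hv⟩ := h
  exact ⟨p ++ p', s' ++ s, x, y, hr, by simp [hu], by simp [hv]⟩

lemma steps_append (p s u v : List L) (h : Steps u v) :
    Steps (p ++ u ++ s) (p ++ v ++ s) := by
  induction h with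
  | refl => exact Relation.ReflTransGen.refl
  | tail _ h2 ih => exact ih.tail (step_append p s _ _ h2)

lemma a_pass (n : ℕ) : Steps ([L.a] ++ rep [L.b] n) (rep [L.b] n ++ [L.a]) := by
  induction n with
  | zero => exact Relation.ReflTransGen.refl
  | succ n ih =>
    rw [rep_succ]
    have s1 : Step ([L.a] ++ ([L.b] ++ rep [L.b] n)) ([L.b] ++ ([L.a] ++ rep [L.b] n)) := by
      have := step_append [] (rep [L.b] n) [L.a, L.b] [L.b, L.a] ⟨[], [], [L.a, L.b], [L.b, L.a],
        Or.inl ⟨rfl, rfl⟩, by simp, by simp⟩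
      simpa using this
    have s2 := steps_append [L.b] [] _ _ ih
    simp only [List.append_nil] at s2
    exact (Relation.ReflTransGen.single s1).trans (by simpa [Steps] using s2)

lemma a_cancel (n : ℕ) : Steps ([L.a] ++ rep [L.b] n ++ [L.A]) (rep [L.b] n) := by
  have h1 := steps_append [] [L.A] _ _ (a_pass n)
  simp only [List.nil_append] at h1
  have h2 : Step (rep [L.b] n ++ [L.a] ++ [L.A]) (rep [L.b] n) := by
    have := step_append (rep [L.b] n) [] [L.a, L.A] [] ⟨[], [], [L.a, L.A], [],
      Or.inr (Or.inr (Or.inr (Or.inr (Or.inl ⟨rfl, rfl⟩)))), by simp, by simp⟩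
    simpa using this
  exact h1.trans (by simpa using Relation.ReflTransGen.single h2)

lemma main_aux (k : ℕ) : ∀ m n : ℕ,
    Steps (rep [L.b, L.a] k ++ rep [L.b] m ++ rep [L.b, L.A] (n + 1 + k))
          (rep [L.b] (m + 2 * k) ++ rep [L.b, L.A] (n + 1)) := by
  induction k with
  | zero =>
    intro m n
    simp only [rep, List.replicate_zero, List.flatten_nil, List.nil_append, Nat.mul_zero,
      Nat.add_zero, List.append_nil]
    exact Relation.ReflTransGen.refl
  | succ k ih =>
    intro m n
    have e1 : rep [L.b, L.a] (k+1) ++ rep [L.b] m ++ rep [L.b, L.A] (n + 1 + (k+1)) =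
        (rep [L.b, L.a] k ++ [L.b]) ++ ([L.a] ++ rep [L.b] (m+1) ++ [L.A]) ++
          rep [L.b, L.A] (n + 1 + k) := by
      have h3 : n + 1 + (k+1) = (n+1+k)+1 := by ring
      rw [h3, rep_succ [L.b, L.A], rep_succ' [L.b, L.a] k, rep_succ' [L.b] m]
      simp
    have e2 : (rep [L.b, L.a] k ++ [L.b]) ++ rep [L.b] (m+1) ++ rep [L.b, L.A] (n + 1 + k) =
        rep [L.b, L.a] k ++ rep [L.b] (m+2) ++ rep [L.b, L.A] (n + 1 + k) := by
      have : rep [L.b] (m+2) = [L.b] ++ rep [L.b] (m+1) := rep_succ _ _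
      rw [this]; simp [List.append_assoc]
    have h1 := steps_append (rep [L.b, L.a] k ++ [L.b]) (rep [L.b, L.A] (n + 1 + k)) _ _
      (a_cancel (m+1))
    rw [← e1] at h1
    rw [e2] at h1
    have h2 := ih (m+2) n
    have : m + 2 + 2 * k = m + 2 * (k + 1) := by ring
    rw [this] at h2
    exact h1.trans h2

/-- Case `i < j` of Lemma 3: `(ba)^i (bā)^j →* b^{2i} (bā)^{j-i}`, and
`(āb)^{j-i} b^{2i}` is the reversal of `b^{2i}(bā)^{j-i}`. -/
theorem subrosa_lemma3_lt (i j : ℕ) (hj : 1 ≤ j) (hij : i < j) :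
    Steps (rep [L.b, L.a] i ++ rep [L.b, L.A] j)
        (rep [L.b] (2 * i) ++ rep [L.b, L.A] (j - i)) ∧
    rep [L.A, L.b] (j - i) ++ rep [L.b] (2 * i) =
      (rep [L.b] (2 * i) ++ rep [L.b, L.A] (j - i)).reverse := by
  constructor
  · have h := main_aux i 0 (j - i - 1)
    have e : j - i - 1 + 1 + i = j := by omega
    have e' : j - i - 1 + 1 = j - i := by omega
    rw [e, e'] at h
    have e0 : rep [L.b] 0 = [] := rfl
    rw [e0, List.append_nil, Nat.zero_add] at h
    exact h
  · rw [List.reverse_append, rep_reverse, rep_reverse]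
    rfl
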